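/- (Theorem 3.15.) Let 𝐁(X,Y)Z denote the (1,3)-form of the PC-Bochner curvature tensor, determined by g(𝐁(X,Y)Z, W) = 𝐁(X,Y,Z,W). If Ric(𝐁(ξ,Y)Z, V) + Ric(Z, 𝐁(ξ,Y)V) = 0 for all Y, Z, V ∈ V, then (α₀² + β₀² − 1)·(Ric(Y,Z) + 2n(α₀² + β₀²)g(Y,Z)) = 0 for all Y, Z ∈ V; that is, either Ric(Y,Z) = −2n(α₀² + β₀²)g(Y,Z) for all Y, Z (Einstein, with scal = −2n(2n+1)(α₀² + β₀²)) or α₀² + β₀² = 1. -/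

import Mathlib

/-!
Evaluating the trans-para-Sasakian identity at `ξ` gives `R(ξ,Y)ξ = (α₀² + β₀²)(Y - η(Y)ξ)`:
pair symmetry kills the `φ`-component, and the gradient condition forces `dβ(ξ) = 0`. Since
`X ↦ R(X,ξ)Z` is the `g`-adjoint of `W ↦ -R(Z,W)ξ`, whose trace can be read off the same identity,
`Ric(ξ,·) = -2n(α₀² + β₀²) η`. With these, the PC-Bochner tensor at `ξ` no longer involves `k`:
`𝐁(ξ,Y)ξ = e (Y - η(Y)ξ)` and `η(𝐁(ξ,Y)U) = -e (g(Y,U) - η(Y)η(U))` with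
`e = 4(α₀² + β₀² - 1)/(2n+4)`, so the hypothesis at `Z = ξ` reads
`e (Ric(Y,U) + 2n(α₀² + β₀²) g(Y,U)) = 0`.
-/

/-- The Ricci tensor: `Ric R Y Z` is the trace of the linear map `X ↦ R X Y Z`. -/
noncomputable def Ric {V : Type*} [AddCommGroup V] [Module ℝ V]
    (R : V →ₗ[ℝ] V →ₗ[ℝ] V →ₗ[ℝ] V) (Y Z : V) : ℝ :=
  LinearMap.trace ℝ V ((LinearMap.applyₗ Z).comp (R.flip Y))

open LinearMap (trace)

namespace LinearMap.BilinForm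

variable {K V : Type*} [Field K] [AddCommGroup V] [Module K V] [FiniteDimensional K V]
  {B : LinearMap.BilinForm K V}

theorem trace_eq_of_isAdjointPair (hB : B.Nondegenerate) {f h : V →ₗ[K] V}
    (hfh : IsAdjointPair B B f h) : trace K V f = trace K V h := by
  have hconj : (B.toDual hB).conj f = Module.Dual.transpose h := by
    ext ψ x
    simp only [LinearEquiv.conj_apply, LinearMap.comp_apply, LinearEquiv.coe_coe, toDual_def,
      Module.Dual.transpose_apply, hfh _ x, apply_toDual_symm_apply]
  rw [← trace_conj' f (B.toDual hB), hconj, trace_transpose']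

theorem trace_eq_mul_finrank (hB : B.Nondegenerate) {Q : V →ₗ[K] V} {c : K}
    (hQ : ∀ X Y, B (Q X) Y = c * B X Y) : trace K V Q = c * Module.finrank K V := by
  have : Q = c • LinearMap.id := by
    ext X
    refine sub_eq_zero.mp (hB.1 _ fun Y => ?_)
    simp [hQ]
  rw [this, map_smul, trace_id, smul_eq_mul]

end LinearMap.BilinForm

section Ricci

variable {V : Type*} [AddCommGroup V] [Module ℝ V] (R : V →ₗ[ℝ] V →ₗ[ℝ] V →ₗ[ℝ] V)

theorem Ric_zero_left (Z : V) : Ric R 0 Z = 0 := by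
  simp [Ric]

theorem Ric_sub_left (Y Y' Z : V) : Ric R (Y - Y') Z = Ric R Y Z - Ric R Y' Z := by
  simp [Ric, LinearMap.comp_sub]

theorem Ric_smul_left (a : ℝ) (Y Z : V) : Ric R (a • Y) Z = a * Ric R Y Z := by
  simp [Ric, LinearMap.comp_smul]

end Ricci

structure AlmostParacontactMetric (V : Type*) [AddCommGroup V] [Module ℝ V] where
  g : LinearMap.BilinForm ℝ V
  g_comm : ∀ X Y, g X Y = g Y X
  nondegenerate : g.Nondegenerate
  φ : V →ₗ[ℝ] V
  ξ : V
  η : V →ₗ[ℝ] ℝ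
  φ_ξ : φ ξ = 0
  η_φ : ∀ X, η (φ X) = 0
  η_ξ : η ξ = 1
  φ_φ : ∀ X, φ (φ X) = X - η X • ξ
  g_φ_φ : ∀ X Y, g (φ X) (φ Y) = -g X Y + η X * η Y

namespace AlmostParacontactMetric

variable {V : Type*} [AddCommGroup V] [Module ℝ V] (P : AlmostParacontactMetric V)

theorem g_ξ_right (X : V) : P.g X P.ξ = P.η X := by
  have h := P.g_φ_φ X P.ξ
  rw [P.φ_ξ, map_zero, P.η_ξ, mul_one] at h
  linarith

theorem g_ξ_left (X : V) : P.g P.ξ X = P.η X := by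
  rw [P.g_comm, g_ξ_right]

theorem g_φ_left (X Y : V) : P.g (P.φ X) Y = -P.g X (P.φ Y) := by
  have h := P.g_φ_φ X (P.φ Y)
  rwa [P.φ_φ, map_sub, map_smul, g_ξ_right, P.η_φ, P.η_φ, smul_zero, sub_zero, mul_zero,
    add_zero] at h

theorem ext_g {u v : V} (h : ∀ W, P.g u W = P.g v W) : u = v :=
  sub_eq_zero.mp (P.nondegenerate.1 _ fun W => by rw [map_sub, LinearMap.sub_apply, h, sub_self])

theorem dα_φ_of_φ_grad {A B : V} {dα dβ : V →ₗ[ℝ] ℝ} {c : ℝ} (hA : ∀ X, P.g A X = dα X)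
    (hB : ∀ X, P.g B X = dβ X) (hgrad : P.φ A = -(c • B)) (Z : V) :
    dα (P.φ Z) = c * dβ Z := by
  rw [← hA, P.g_comm, g_φ_left, P.g_comm, hgrad, map_neg, map_smul, LinearMap.neg_apply,
    LinearMap.smul_apply, hB, smul_eq_mul, neg_neg]

theorem trace_φ [FiniteDimensional ℝ V] : trace ℝ V P.φ = 0 := by
  have h := P.g.trace_eq_of_isAdjointPair P.nondegenerate (f := P.φ) (h := -P.φ)
    fun X Y => by rw [g_φ_left, LinearMap.neg_apply, map_neg]
  rw [map_neg] at h
  linarith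

theorem trace_φ_comp_φ [FiniteDimensional ℝ V] :
    trace ℝ V (P.φ ∘ₗ P.φ) = Module.finrank ℝ V - 1 := by
  have : P.φ ∘ₗ P.φ = LinearMap.id - P.η.smulRight P.ξ := by
    ext X
    simp [P.φ_φ]
  rw [this, map_sub, LinearMap.trace_id, LinearMap.trace_smulRight, P.η_ξ]

def IsTransParaSasakianCurvature (R : V →ₗ[ℝ] V →ₗ[ℝ] V →ₗ[ℝ] V) (α₀ β₀ : ℝ)
    (dα dβ : V →ₗ[ℝ] ℝ) : Prop :=
  ∀ X Y, R X Y P.ξ = -((α₀ ^ 2 + β₀ ^ 2) • (P.η Y • X - P.η X • Y))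
    - (2 * α₀ * β₀) • (P.η Y • P.φ X - P.η X • P.φ Y)
    - dα X • P.φ Y + dα Y • P.φ X + dβ Y • P.φ (P.φ X) - dβ X • P.φ (P.φ Y)

noncomputable def pcBochner (R : V →ₗ[ℝ] V →ₗ[ℝ] V →ₗ[ℝ] V) (n : ℕ) (k : ℝ) (X Y Z W : V) :
    ℝ :=
  P.g (R X Y Z) W
    + (1 / (2 * (n : ℝ) + 4)) * (Ric R X Z * P.g Y W - Ric R Y Z * P.g X W
      + Ric R Y W * P.g X Z - Ric R X W * P.g Y Z
      + Ric R (P.φ X) Z * P.g Y (P.φ W) - Ric R (P.φ Y) Z * P.g X (P.φ W)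
      + Ric R (P.φ Y) W * P.g X (P.φ Z) - Ric R (P.φ X) W * P.g Y (P.φ Z)
      + 2 * Ric R (P.φ X) Y * P.g Z (P.φ W) + 2 * Ric R (P.φ Z) W * P.g X (P.φ Y)
      - Ric R X Z * (P.η Y * P.η W) + Ric R Y Z * (P.η X * P.η W)
      - Ric R Y W * (P.η X * P.η Z) + Ric R X W * (P.η Y * P.η Z))
    + ((k - 4) / (2 * (n : ℝ) + 4)) * (P.g X Z * P.g Y W - P.g Y Z * P.g X W)
    - ((k + 2 * (n : ℝ)) / (2 * (n : ℝ) + 4)) * (P.g Y (P.φ W) * P.g X (P.φ Z)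
      - P.g X (P.φ W) * P.g Y (P.φ Z) + 2 * P.g X (P.φ Y) * P.g Z (P.φ W))
    - (k / (2 * (n : ℝ) + 4)) * (P.g X Z * (P.η Y * P.η W) - P.g Y Z * (P.η X * P.η W)
      + P.g Y W * (P.η X * P.η Z) - P.g X W * (P.η Y * P.η Z))

theorem pcBochner_ξ_left {R : V →ₗ[ℝ] V →ₗ[ℝ] V →ₗ[ℝ] V} {a : ℝ}
    (hRic : ∀ Z, Ric R P.ξ Z = a * P.η Z) (n : ℕ) (k : ℝ) (Y Z W : V) :
    P.pcBochner R n k P.ξ Y Z W = P.g (R P.ξ Y Z) W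
      + (a - 4) / (2 * (n : ℝ) + 4) * (P.η Z * P.g Y W - P.η W * P.g Y Z) := by
  simp only [pcBochner, P.φ_ξ, Ric_zero_left, hRic, g_ξ_left, P.η_φ, P.η_ξ]
  ring

namespace IsTransParaSasakianCurvature

variable {P} {R : V →ₗ[ℝ] V →ₗ[ℝ] V →ₗ[ℝ] V} {α₀ β₀ : ℝ} {dα dβ : V →ₗ[ℝ] ℝ}

theorem apply_ξ_ξ (hR : P.IsTransParaSasakianCurvature R α₀ β₀ dα dβ)
    (hpair : ∀ X Y Z W, P.g (R X Y Z) W = P.g (R Z W X) Y) (Y : V) :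
    R P.ξ Y P.ξ = (α₀ ^ 2 + β₀ ^ 2 - dβ P.ξ) • (Y - P.η Y • P.ξ) := by
  have hform : ∀ Y, R P.ξ Y P.ξ = (α₀ ^ 2 + β₀ ^ 2 - dβ P.ξ) • (Y - P.η Y • P.ξ)
      + (2 * α₀ * β₀ - dα P.ξ) • P.φ Y := by
    intro Y
    rw [hR, P.φ_ξ, P.η_ξ, P.φ_φ]
    simp only [map_zero, smul_zero]
    module
  -- pair symmetry makes `(Y, W) ↦ g (R ξ Y ξ) W` symmetric, while its `φ`-part is skew
  have hφ : (2 * α₀ * β₀ - dα P.ξ) • P.φ Y = 0 := by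
    refine P.ext_g fun W => ?_
    have h := hpair P.ξ Y P.ξ W
    rw [hform, hform] at h
    simp only [map_add, map_sub, map_smul, LinearMap.add_apply, LinearMap.sub_apply,
      LinearMap.smul_apply, smul_eq_mul, g_ξ_left] at h
    have hW : P.g (P.φ W) Y = -P.g (P.φ Y) W := by rw [g_φ_left, P.g_comm]
    rw [map_smul, LinearMap.smul_apply, smul_eq_mul, map_zero, LinearMap.zero_apply]
    linear_combination h / 2 + (α₀ ^ 2 + β₀ ^ 2 - dβ P.ξ) / 2 * P.g_comm W Y
      + (2 * α₀ * β₀ - dα P.ξ) / 2 * hW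
  rw [hform, hφ, add_zero]

theorem Ric_ξ_left [FiniteDimensional ℝ V] (hR : P.IsTransParaSasakianCurvature R α₀ β₀ dα dβ)
    (hanti : ∀ X Y Z W, P.g (R X Y Z) W = -P.g (R X Y W) Z)
    (hpair : ∀ X Y Z W, P.g (R X Y Z) W = P.g (R Z W X) Y) (Z : V) :
    Ric R P.ξ Z = (1 - Module.finrank ℝ V) * (α₀ ^ 2 + β₀ ^ 2) * P.η Z
      + (Module.finrank ℝ V - 2) * dβ Z - dα (P.φ Z) + dβ P.ξ * P.η Z := by
  have hadj : Ric R P.ξ Z = trace ℝ V (-(R Z).flip P.ξ) :=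
    P.g.trace_eq_of_isAdjointPair P.nondegenerate fun X W => by
      simp only [LinearMap.comp_apply, LinearMap.flip_apply, LinearMap.applyₗ_apply_apply,
        LinearMap.neg_apply, map_neg]
      rw [hpair, hanti, P.g_comm]
  have hmap : (R Z).flip P.ξ = -(α₀ ^ 2 + β₀ ^ 2) • P.η.smulRight Z
      + ((α₀ ^ 2 + β₀ ^ 2) * P.η Z) • LinearMap.id
      - (2 * α₀ * β₀) • P.η.smulRight (P.φ Z) + (2 * α₀ * β₀ * P.η Z - dα Z) • P.φ
      + dα.smulRight (P.φ Z) + dβ.smulRight (P.φ (P.φ Z)) - dβ Z • (P.φ ∘ₗ P.φ) := by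
    ext W
    rw [LinearMap.flip_apply, hR]
    simp only [LinearMap.add_apply, LinearMap.sub_apply, LinearMap.smul_apply,
      LinearMap.smulRight_apply, LinearMap.id_apply, LinearMap.comp_apply]
    module
  rw [hadj, map_neg, hmap]
  simp only [map_add, map_sub, map_smul, LinearMap.trace_smulRight, LinearMap.trace_id,
    P.trace_φ, P.trace_φ_comp_φ, P.η_φ, P.φ_φ, smul_eq_mul]
  ring

theorem mul_Ric_sub_eq_zero (hR : P.IsTransParaSasakianCurvature R α₀ β₀ dα dβ)
    (hanti : ∀ X Y Z W, P.g (R X Y Z) W = -P.g (R X Y W) Z)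
    (hpair : ∀ X Y Z W, P.g (R X Y Z) W = P.g (R Z W X) Y)
    {a : ℝ} (hRic : ∀ Z, Ric R P.ξ Z = a * P.η Z) (n : ℕ) (k : ℝ) (T : V → V → V)
    (hT : ∀ Y Z W, P.g (T Y Z) W = P.pcBochner R n k P.ξ Y Z W)
    (hcond : ∀ Y U, Ric R (T Y P.ξ) U + Ric R P.ξ (T Y U) = 0) (Y U : V) :
    (α₀ ^ 2 + β₀ ^ 2 - dβ P.ξ + (a - 4) / (2 * (n : ℝ) + 4)) * (Ric R Y U - a * P.g Y U)
      = 0 := by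
  set e := α₀ ^ 2 + β₀ ^ 2 - dβ P.ξ + (a - 4) / (2 * (n : ℝ) + 4) with he
  have hTξ : T Y P.ξ = e • (Y - P.η Y • P.ξ) := P.ext_g fun W => by
    rw [hT, pcBochner_ξ_left P hRic, hR.apply_ξ_ξ hpair]
    simp only [map_smul, map_sub, LinearMap.smul_apply, LinearMap.sub_apply, smul_eq_mul,
      g_ξ_left, g_ξ_right, P.η_ξ, he]
    ring
  have hηT : P.η (T Y U) = -e * (P.g Y U - P.η Y * P.η U) := by
    rw [← g_ξ_right, hT, pcBochner_ξ_left P hRic, hanti, hR.apply_ξ_ξ hpair]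
    simp only [map_smul, map_sub, LinearMap.smul_apply, LinearMap.sub_apply, smul_eq_mul,
      g_ξ_left, g_ξ_right, P.η_ξ, he]
    ring
  have h := hcond Y U
  rw [hTξ, Ric_smul_left, Ric_sub_left, Ric_smul_left, hRic, hRic, hηT] at h
  linear_combination h

end IsTransParaSasakianCurvature

end AlmostParacontactMetric

theorem stmt_18_general
    (n : ℕ)
    (V : Type*) [AddCommGroup V] [Module ℝ V] [FiniteDimensional ℝ V]
    (hdim : Module.finrank ℝ V = 2 * n + 1)
    (g : LinearMap.BilinForm ℝ V)
    (hg_symm : ∀ X Y : V, g X Y = g Y X)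
    (hg_nondeg : g.Nondegenerate)
    (φ : V →ₗ[ℝ] V) (ξ : V) (η : V →ₗ[ℝ] ℝ)
    (hφξ : φ ξ = 0) (hηφ : ∀ X : V, η (φ X) = 0)
    (hηξ : η ξ = 1) (hφ2 : ∀ X : V, φ (φ X) = X - η X • ξ)
    (hgφ : ∀ X Y : V, g (φ X) (φ Y) = - g X Y + η X * η Y)
    (R : V →ₗ[ℝ] V →ₗ[ℝ] V →ₗ[ℝ] V)
    (hR_a2 : ∀ X Y Z W : V, g (R X Y Z) W = - g (R X Y W) Z)
    (hR_pair : ∀ X Y Z W : V, g (R X Y Z) W = g (R Z W X) Y)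
    (α₀ β₀ : ℝ) (dα dβ : V →ₗ[ℝ] ℝ)
    (hTPS : ∀ X Y : V, R X Y ξ =
      -((α₀ ^ 2 + β₀ ^ 2) • (η Y • X - η X • Y))
      - (2 * α₀ * β₀) • (η Y • φ X - η X • φ Y)
      - dα X • φ Y + dα Y • φ X + dβ Y • φ (φ X) - dβ X • φ (φ Y))
    (Qop : V →ₗ[ℝ] V) (hQ : ∀ X Y : V, g (Qop X) Y = Ric R X Y)
    (scal : ℝ) (hscal : scal = LinearMap.trace ℝ V Qop)
    (A B : V) (hA : ∀ X : V, g A X = dα X) (hB : ∀ X : V, g B X = dβ X)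
    (hgrad : φ A = -((2 * (n : ℝ) - 1) • B))
    (k : ℝ)
    (Bt : V → V → V → V → ℝ)
    (hBt : ∀ X Y Z W : V, Bt X Y Z W = g (R X Y Z) W
      + (1 / (2 * (n : ℝ) + 4)) * (Ric R X Z * g Y W - Ric R Y Z * g X W
        + Ric R Y W * g X Z - Ric R X W * g Y Z
        + Ric R (φ X) Z * g Y (φ W) - Ric R (φ Y) Z * g X (φ W)
        + Ric R (φ Y) W * g X (φ Z) - Ric R (φ X) W * g Y (φ Z)
        + 2 * Ric R (φ X) Y * g Z (φ W) + 2 * Ric R (φ Z) W * g X (φ Y)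
        - Ric R X Z * (η Y * η W) + Ric R Y Z * (η X * η W)
        - Ric R Y W * (η X * η Z) + Ric R X W * (η Y * η Z))
      + ((k - 4) / (2 * (n : ℝ) + 4)) * (g X Z * g Y W - g Y Z * g X W)
      - ((k + 2 * (n : ℝ)) / (2 * (n : ℝ) + 4)) * (g Y (φ W) * g X (φ Z)
        - g X (φ W) * g Y (φ Z) + 2 * g X (φ Y) * g Z (φ W))
      - (k / (2 * (n : ℝ) + 4)) * (g X Z * (η Y * η W) - g Y Z * (η X * η W)
        + g Y W * (η X * η Z) - g X W * (η Y * η Z)))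
    (B13 : V → V → V → V)
    (hB13 : ∀ X Y Z W : V, g (B13 X Y Z) W = Bt X Y Z W)
    (hcond : ∀ Y Z U : V, Ric R (B13 ξ Y Z) U + Ric R Z (B13 ξ Y U) = 0)
    :
    (∀ Y Z : V, (α₀ ^ 2 + β₀ ^ 2 - 1) *
        (Ric R Y Z + 2 * (n : ℝ) * (α₀ ^ 2 + β₀ ^ 2) * g Y Z) = 0) ∧
    (((∀ Y Z : V, Ric R Y Z = -(2 * (n : ℝ) * (α₀ ^ 2 + β₀ ^ 2)) * g Y Z) ∧
        scal = -(2 * (n : ℝ) * (2 * (n : ℝ) + 1) * (α₀ ^ 2 + β₀ ^ 2))) ∨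
      α₀ ^ 2 + β₀ ^ 2 = 1) := by
  let P : AlmostParacontactMetric V := ⟨g, hg_symm, hg_nondeg, φ, ξ, η, hφξ, hηφ, hηξ, hφ2, hgφ⟩
  have hR : P.IsTransParaSasakianCurvature R α₀ β₀ dα dβ := hTPS
  have hαφ : ∀ Z, dα (φ Z) = (2 * n - 1) * dβ Z := P.dα_φ_of_φ_grad hA hB hgrad
  have hdβξ : dβ ξ = 0 := by
    have h := hαφ ξ
    rw [hφξ, map_zero, eq_comm, mul_eq_zero] at h
    refine h.resolve_left ?_
    rw [← Ne, sub_ne_zero]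
    exact_mod_cast (by omega : 2 * n ≠ 1)
  have hRic : ∀ Z, Ric R ξ Z = -(2 * n * (α₀ ^ 2 + β₀ ^ 2)) * η Z := fun Z => by
    rw [hR.Ric_ξ_left hR_a2 hR_pair, hdim, hαφ, hdβξ]
    push_cast
    ring
  have hkey : ∀ Y Z, (α₀ ^ 2 + β₀ ^ 2 - 1) * (Ric R Y Z + 2 * n * (α₀ ^ 2 + β₀ ^ 2) * g Y Z)
      = 0 := fun Y Z => by
    have h := hR.mul_Ric_sub_eq_zero hR_a2 hR_pair hRic n k (B13 ξ)
      (fun Y Z W => (hB13 ξ Y Z W).trans (hBt ξ Y Z W)) (fun Y U => hcond Y ξ U) Y Z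
    rw [hdβξ] at h
    field_simp at h
    linear_combination h / 4
  refine ⟨hkey, or_iff_not_imp_right.mpr fun hs => ?_⟩
  have hEinstein : ∀ Y Z, Ric R Y Z = -(2 * n * (α₀ ^ 2 + β₀ ^ 2)) * g Y Z := fun Y Z => by
    have h := (mul_eq_zero.mp (hkey Y Z)).resolve_left (sub_ne_zero.mpr hs)
    linear_combination h
  refine ⟨hEinstein, ?_⟩
  rw [hscal, g.trace_eq_mul_finrank hg_nondeg fun X Y => (hQ X Y).trans (hEinstein X Y), hdim]
  push_cast
  ring

theorem stmt_18
    (n : ℕ) (hn : 1 ≤ n)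
    (V : Type*) [AddCommGroup V] [Module ℝ V] [FiniteDimensional ℝ V]
    (hdim : Module.finrank ℝ V = 2 * n + 1)
    (g : LinearMap.BilinForm ℝ V)
    (hg_symm : ∀ X Y : V, g X Y = g Y X)
    (hg_nondeg : g.Nondegenerate)
    (φ : V →ₗ[ℝ] V) (ξ : V) (η : V →ₗ[ℝ] ℝ)
    (hφξ : φ ξ = 0) (hηφ : ∀ X : V, η (φ X) = 0)
    (hηξ : η ξ = 1) (hφ2 : ∀ X : V, φ (φ X) = X - η X • ξ)
    (hgφ : ∀ X Y : V, g (φ X) (φ Y) = - g X Y + η X * η Y)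
    (R : V →ₗ[ℝ] V →ₗ[ℝ] V →ₗ[ℝ] V)
    (hR_a1 : ∀ X Y Z W : V, g (R X Y Z) W = - g (R Y X Z) W)
    (hR_a2 : ∀ X Y Z W : V, g (R X Y Z) W = - g (R X Y W) Z)
    (hR_pair : ∀ X Y Z W : V, g (R X Y Z) W = g (R Z W X) Y)
    (α₀ β₀ : ℝ) (dα dβ : V →ₗ[ℝ] ℝ)
    (hTPS : ∀ X Y : V, R X Y ξ =
      -((α₀ ^ 2 + β₀ ^ 2) • (η Y • X - η X • Y))
      - (2 * α₀ * β₀) • (η Y • φ X - η X • φ Y)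
      - dα X • φ Y + dα Y • φ X + dβ Y • φ (φ X) - dβ X • φ (φ Y))
    (Qop : V →ₗ[ℝ] V) (hQ : ∀ X Y : V, g (Qop X) Y = Ric R X Y)
    (scal : ℝ) (hscal : scal = LinearMap.trace ℝ V Qop)
    (A B : V) (hA : ∀ X : V, g A X = dα X) (hB : ∀ X : V, g B X = dβ X)
    (hgrad : φ A = -((2 * (n : ℝ) - 1) • B))
    (k : ℝ) (hk : k = -((scal - 2 * (n : ℝ)) / (2 * (n : ℝ) + 2)))
    (Bt : V → V → V → V → ℝ)
    (hBt : ∀ X Y Z W : V, Bt X Y Z W = g (R X Y Z) W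
      + (1 / (2 * (n : ℝ) + 4)) * (Ric R X Z * g Y W - Ric R Y Z * g X W
        + Ric R Y W * g X Z - Ric R X W * g Y Z
        + Ric R (φ X) Z * g Y (φ W) - Ric R (φ Y) Z * g X (φ W)
        + Ric R (φ Y) W * g X (φ Z) - Ric R (φ X) W * g Y (φ Z)
        + 2 * Ric R (φ X) Y * g Z (φ W) + 2 * Ric R (φ Z) W * g X (φ Y)
        - Ric R X Z * (η Y * η W) + Ric R Y Z * (η X * η W)
        - Ric R Y W * (η X * η Z) + Ric R X W * (η Y * η Z))
      + ((k - 4) / (2 * (n : ℝ) + 4)) * (g X Z * g Y W - g Y Z * g X W)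
      - ((k + 2 * (n : ℝ)) / (2 * (n : ℝ) + 4)) * (g Y (φ W) * g X (φ Z)
        - g X (φ W) * g Y (φ Z) + 2 * g X (φ Y) * g Z (φ W))
      - (k / (2 * (n : ℝ) + 4)) * (g X Z * (η Y * η W) - g Y Z * (η X * η W)
        + g Y W * (η X * η Z) - g X W * (η Y * η Z)))
    (B13 : V → V → V → V)
    (hB13 : ∀ X Y Z W : V, g (B13 X Y Z) W = Bt X Y Z W)
    (hcond : ∀ Y Z U : V, Ric R (B13 ξ Y Z) U + Ric R Z (B13 ξ Y U) = 0)
    :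
    (∀ Y Z : V, (α₀ ^ 2 + β₀ ^ 2 - 1) *
        (Ric R Y Z + 2 * (n : ℝ) * (α₀ ^ 2 + β₀ ^ 2) * g Y Z) = 0) ∧
    (((∀ Y Z : V, Ric R Y Z = -(2 * (n : ℝ) * (α₀ ^ 2 + β₀ ^ 2)) * g Y Z) ∧
        scal = -(2 * (n : ℝ) * (2 * (n : ℝ) + 1) * (α₀ ^ 2 + β₀ ^ 2))) ∨
      α₀ ^ 2 + β₀ ^ 2 = 1) :=
  stmt_18_general n V hdim g hg_symm hg_nondeg φ ξ η hφξ hηφ hηξ hφ2 hgφ R hR_a2 hR_pair α₀ β₀ dα dβ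
    hTPS Qop hQ scal hscal A B hA hB hgrad k Bt hBt B13 hB13 hcond
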